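/- The function $\Phi(x,y) = (x-y)(\log x - \log y)$ is jointly convex on $(0,\infty)\times(0,\infty)$. -/

import Mathlib

/-! Writing `g u = (u - 1) * log u`, we have `Φ(x, y) = y * g (x / y)`, so `Φ` is the perspective
of `g`. Since `g u = u * log u - log u` is convex on `(0, ∞)` and perspectives of convex functions
are jointly convex, so is `Φ`. -/

open Real Set

theorem ConvexOn.perspective {E : Type*} [AddCommGroup E] [Module ℝ E] {s : Set E} {f : E → ℝ}
    (hf : ConvexOn ℝ s f) :
    ConvexOn ℝ {p : E × ℝ | 0 < p.2 ∧ p.2⁻¹ • p.1 ∈ s} (fun p => p.2 * f (p.2⁻¹ • p.1)) := by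
  -- After rescaling by the last coordinate, a convex combination with weights `a, b` becomes one
  -- with weights `a * t / (a * t + b * u)` and `b * u / (a * t + b * u)`.
  have hmix : ∀ ⦃p q : E × ℝ⦄, 0 < p.2 → 0 < q.2 → ∀ ⦃a b : ℝ⦄, 0 ≤ a → 0 ≤ b → a + b = 1 →
      0 < (a • p + b • q).2 ∧
      (a • p + b • q).2⁻¹ • (a • p + b • q).1 =
        (a * p.2 / (a • p + b • q).2) • (p.2⁻¹ • p.1) +
          (b * q.2 / (a • p + b • q).2) • (q.2⁻¹ • q.1) ∧
      a * p.2 / (a • p + b • q).2 + b * q.2 / (a • p + b • q).2 = 1 := by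
    rintro ⟨x, t⟩ ⟨y, u⟩ (ht : 0 < t) (hu : 0 < u) a b ha hb hab
    simp only [Prod.smul_mk, Prod.mk_add_mk, smul_eq_mul]
    have hpos : 0 < a * t + b * u := by
      rcases ha.eq_or_lt with rfl | ha
      · rw [zero_add] at hab
        simpa [hab] using hu
      · positivity
    refine ⟨hpos, ?_, by field_simp⟩
    simp only [smul_add, smul_smul]
    congr 2 <;> field_simp
  constructor
  · rintro p ⟨hp, hps⟩ q ⟨hq, hqs⟩ a b ha hb hab
    obtain ⟨hpos, hcomb, hsum⟩ := hmix hp hq ha hb hab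
    exact ⟨hpos, hcomb ▸ hf.1 hps hqs (by positivity) (by positivity) hsum⟩
  · rintro p ⟨hp, hps⟩ q ⟨hq, hqs⟩ a b ha hb hab
    obtain ⟨hpos, hcomb, hsum⟩ := hmix hp hq ha hb hab
    have hjensen := hf.2 hps hqs (by positivity : 0 ≤ a * p.2 / (a • p + b • q).2)
      (by positivity : 0 ≤ b * q.2 / (a • p + b • q).2) hsum
    rw [← hcomb] at hjensen
    calc (a • p + b • q).2 * f ((a • p + b • q).2⁻¹ • (a • p + b • q).1)
        ≤ (a • p + b • q).2 * ((a * p.2 / (a • p + b • q).2) • f (p.2⁻¹ • p.1) +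
            (b * q.2 / (a • p + b • q).2) • f (q.2⁻¹ • q.1)) :=
          mul_le_mul_of_nonneg_left hjensen hpos.le
      _ = a • (p.2 * f (p.2⁻¹ • p.1)) + b • (q.2 * f (q.2⁻¹ • q.1)) := by
          simp only [smul_eq_mul]
          field_simp

theorem convexOn_sub_one_mul_log : ConvexOn ℝ (Ioi 0) (fun u : ℝ => (u - 1) * log u) :=
  ((convexOn_mul_log.subset Ioi_subset_Ici_self (convex_Ioi 0)).add
    strictConcaveOn_log_Ioi.concaveOn.neg).congr fun u _ => by
      simp only [Pi.add_apply, Pi.neg_apply]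
      ring

theorem jointly_convex_log_diff :
    ConvexOn ℝ (Set.Ioi (0 : ℝ) ×ˢ Set.Ioi (0 : ℝ))
      (fun p : ℝ × ℝ => (p.1 - p.2) * (Real.log p.1 - Real.log p.2)) := by
  have hdom : {p : ℝ × ℝ | 0 < p.2 ∧ p.2⁻¹ • p.1 ∈ Ioi 0} = Ioi 0 ×ˢ Ioi 0 := by
    ext ⟨x, y⟩
    simp only [mem_ofPred_eq, mem_prod, mem_Ioi, smul_eq_mul]
    constructor
    · rintro ⟨hy, hxy⟩
      exact ⟨(pos_iff_pos_of_mul_pos hxy).1 (inv_pos.2 hy), hy⟩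
    · rintro ⟨hx, hy⟩
      exact ⟨hy, by positivity⟩
  refine hdom ▸ convexOn_sub_one_mul_log.perspective |>.congr ?_
  rintro ⟨x, y⟩ ⟨hx : 0 < x, hy : 0 < y⟩
  dsimp only [smul_eq_mul]
  rw [log_mul (inv_pos.2 hy).ne' hx.ne', log_inv]
  field_simp
  ring
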